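/- arXiv:2510.25172 — 2 statements merged into one kernel-verified Lean document; each statement's English description precedes it below -/
import Mathlib

section
/- There exist real constants α₁,...,α₁₀ with α₁ ≠ 0 such that for any sequence (eⁿ) in an inner product space, ⟨(11/6)e^{n+1} - 3eⁿ + (3/2)e^{n-1} - (1/3)e^{n-2}, 2e^{n+1} - eⁿ⟩ = ‖α₁e^{n+1}‖² - ‖α₁eⁿ‖² + ‖α₂e^{n+1} + α₃eⁿ‖² - ‖α₂eⁿ + α₃e^{n-1}‖² + ‖α₄e^{n+1} + α₅eⁿ + α₆e^{n-1}‖² - ‖α₄eⁿ + α₅e^{n-1} + α₆e^{n-2}‖² + ‖α₇e^{n+1} + α₈eⁿ + α₉e^{n-1} + α₁₀e^{n-2}‖². -/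
/-!
Write `v₃, v₂, v₁, v₀` for `e (n+1), e n, e (n-1), e (n-2)`. The left side is a quadratic form
in these vectors whose symbol on the unit circle is `(1/3) |1 - ζ|² (4 cos² θ - 6 cos θ + 5) ≥ 0`.
Take the last square to be `p₀ v₃ + p₁ v₂ + p₂ v₁ + p₃ v₀` for a spectral factor
`p₀ + p₁ ζ + p₂ ζ² + p₃ ζ³` of this symbol, i.e. with autocorrelations `20/3, -14/3, 5/3, -1/3`.
The rest of the form then telescopes as `G(v₃, v₂, v₁) - G(v₂, v₁, v₀)` for a quadratic form `G`
determined linearly by `p`, and completing squares in `G` starting from its last variable gives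
`α₆ = α₃ = p₃` and `α₅ = p₂`, with `α₁²` a Schur complement of `G` that turns out to be positive.
Normalising `p₀ = x`, the factor is rational in `x`, and `3 x²` is a root of
`y⁴ - 5 y³ - 3 y² - 5 y + 1`.
-/

open scoped RealInnerProductSpace

theorem inner_bdf3_eq_of_spectral_factor {V : Type*} [NormedAddCommGroup V]
    [InnerProductSpace ℝ V] {p₀ p₁ p₂ p₃ a₁ a₂ a₄ : ℝ}
    (h₀ : p₀ ^ 2 + p₁ ^ 2 + p₂ ^ 2 + p₃ ^ 2 = 20 / 3)
    (h₁ : p₀ * p₁ + p₁ * p₂ + p₂ * p₃ = -14 / 3)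
    (h₂ : p₀ * p₂ + p₁ * p₃ = 5 / 3) (h₃ : p₀ * p₃ = -1 / 3)
    (ha₄ : a₄ * p₃ = p₁ * p₃ - 1 / 6) (ha₂ : a₂ * p₃ + a₄ * p₂ + p₀ * p₁ = -47 / 12)
    (ha₁ : a₁ ^ 2 + a₂ ^ 2 + a₄ ^ 2 + p₀ ^ 2 = 11 / 3) (v₀ v₁ v₂ v₃ : V) :
    ⟪(11/6 : ℝ) • v₃ - (3 : ℝ) • v₂ + (3/2 : ℝ) • v₁ - (1/3 : ℝ) • v₀, (2 : ℝ) • v₃ - v₂⟫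
      = ‖a₁ • v₃‖ ^ 2 - ‖a₁ • v₂‖ ^ 2 + ‖a₂ • v₃ + p₃ • v₂‖ ^ 2 - ‖a₂ • v₂ + p₃ • v₁‖ ^ 2
        + ‖a₄ • v₃ + p₂ • v₂ + p₃ • v₁‖ ^ 2 - ‖a₄ • v₂ + p₂ • v₁ + p₃ • v₀‖ ^ 2
        + ‖p₀ • v₃ + p₁ • v₂ + p₂ • v₁ + p₃ • v₀‖ ^ 2 := by
  simp only [← real_inner_self_eq_norm_sq, inner_sub_left, inner_sub_right, inner_add_left,
    inner_add_right, real_inner_smul_left, real_inner_smul_right, real_inner_comm v₃ v₂,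
    real_inner_comm v₃ v₁, real_inner_comm v₃ v₀, real_inner_comm v₂ v₁, real_inner_comm v₂ v₀,
    real_inner_comm v₁ v₀]
  linear_combination (⟪v₂, v₂⟫ - ⟪v₃, v₃⟫) * ha₁ - ⟪v₂, v₂⟫ * h₀
    + 2 * (⟪v₂, v₁⟫ - ⟪v₃, v₂⟫) * ha₂ + 2 * (⟪v₂, v₀⟫ - ⟪v₃, v₁⟫) * ha₄
    - 2 * ⟪v₃, v₁⟫ * h₂ - 2 * ⟪v₃, v₀⟫ * h₃ - 2 * ⟪v₂, v₁⟫ * h₁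

theorem exists_bdf3_factor_root : ∃ x ∈ Set.Icc (0.242 : ℝ) 0.243,
    (3 * x ^ 2) ^ 4 - 5 * (3 * x ^ 2) ^ 3 - 3 * (3 * x ^ 2) ^ 2 - 5 * (3 * x ^ 2) + 1 = 0 :=
  intermediate_value_Icc' (by norm_num) (by fun_prop) ⟨by norm_num, by norm_num⟩

theorem bdf3_schur_complement_pos {x m : ℝ} (hx : x ∈ Set.Icc (0.242 : ℝ) 0.243)
    (hm : m ∈ Set.Icc (1.17 : ℝ) 1.18) :
    0 < 11 / 3 - x ^ 2 - (x * (36 - 30 * m + 31 * m ^ 2 - 4 * m ^ 3) / (4 * m ^ 2)) ^ 2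
      - (-x * (m + 6) / (2 * m)) ^ 2 := by
  obtain ⟨hx₁, hx₂⟩ := hx
  obtain ⟨hm₁, hm₂⟩ := hm
  have hN : 36 - 30 * m + 31 * m ^ 2 - 4 * m ^ 3 ≤ 37.3 := by
    nlinarith [mul_nonneg (sub_nonneg.2 hm₁) (sub_nonneg.2 hm₂)]
  have ha₂ : |x * (36 - 30 * m + 31 * m ^ 2 - 4 * m ^ 3) / (4 * m ^ 2)| ≤ 17 / 10 := by
    rw [abs_le, le_div_iff₀ (by positivity), div_le_iff₀ (by positivity)]
    constructor <;> nlinarith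
  have ha₄ : |-x * (m + 6) / (2 * m)| ≤ 3 / 4 := by
    rw [abs_le, le_div_iff₀ (by positivity), div_le_iff₀ (by positivity)]
    constructor <;> nlinarith
  nlinarith [sq_le_sq' (abs_le.1 ha₂).1 (abs_le.1 ha₂).2,
    sq_le_sq' (abs_le.1 ha₄).1 (abs_le.1 ha₄).2]

theorem exists_bdf3_spectral_factor : ∃ p₀ p₁ p₂ p₃ a₁ a₂ a₄ : ℝ, a₁ ≠ 0 ∧
    p₀ ^ 2 + p₁ ^ 2 + p₂ ^ 2 + p₃ ^ 2 = 20 / 3 ∧ p₀ * p₁ + p₁ * p₂ + p₂ * p₃ = -14 / 3 ∧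
    p₀ * p₂ + p₁ * p₃ = 5 / 3 ∧ p₀ * p₃ = -1 / 3 ∧
    a₄ * p₃ = p₁ * p₃ - 1 / 6 ∧ a₂ * p₃ + a₄ * p₂ + p₀ * p₁ = -47 / 12 ∧
    a₁ ^ 2 + a₂ ^ 2 + a₄ ^ 2 + p₀ ^ 2 = 11 / 3 := by
  obtain ⟨x, hx, hroot⟩ := exists_bdf3_factor_root
  set m := 3 * x ^ 2 + 1 with hm
  have hx₀ : x ≠ 0 := by linarith [hx.1]
  have hm₀ : m ≠ 0 := by positivity
  have hmI : m ∈ Set.Icc (1.17 : ℝ) 1.18 := by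
    constructor <;> nlinarith [hx.1, hx.2]
  have hpos := bdf3_schur_complement_pos hx hmI
  refine ⟨x, -x * (m + 3) / m, (4 * m - 3) / (3 * x * m), -1 / (3 * x), √_,
    x * (36 - 30 * m + 31 * m ^ 2 - 4 * m ^ 3) / (4 * m ^ 2), -x * (m + 6) / (2 * m),
    (Real.sqrt_pos.2 hpos).ne', ?_, ?_, ?_, ?_, ?_, ?_, ?_⟩
  · field_simp
    rw [hm]
    linear_combination 2 * hroot
  · field_simp
    rw [hm]
    linear_combination -hroot
  · field_simp
    ring
  · field_simp
  · field_simp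
    ring
  · field_simp
    ring
  · rw [Real.sq_sqrt hpos.le]
    ring

theorem stmt2 :
    ∃ a1 a2 a3 a4 a5 a6 a7 a8 a9 a10 : ℝ, a1 ≠ 0 ∧
      ∀ (V : Type) [NormedAddCommGroup V] [InnerProductSpace ℝ V]
        (e : ℤ → V) (n : ℤ),
        (inner ℝ ((11/6 : ℝ) • e (n+1) - (3 : ℝ) • e n + (3/2 : ℝ) • e (n-1)
            - (1/3 : ℝ) • e (n-2)) ((2 : ℝ) • e (n+1) - e n) : ℝ)
        = ‖a1 • e (n+1)‖^2 - ‖a1 • e n‖^2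
          + ‖a2 • e (n+1) + a3 • e n‖^2 - ‖a2 • e n + a3 • e (n-1)‖^2
          + ‖a4 • e (n+1) + a5 • e n + a6 • e (n-1)‖^2
          - ‖a4 • e n + a5 • e (n-1) + a6 • e (n-2)‖^2
          + ‖a7 • e (n+1) + a8 • e n + a9 • e (n-1) + a10 • e (n-2)‖^2 := by
  obtain ⟨p₀, p₁, p₂, p₃, a₁, a₂, a₄, ha₁₀, h₀, h₁, h₂, h₃, ha₄, ha₂, ha₁⟩ :=
    exists_bdf3_spectral_factor
  exact ⟨a₁, a₂, p₃, a₄, p₂, p₃, p₀, p₁, p₂, p₃, ha₁₀, fun V _ _ e n =>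
    inner_bdf3_eq_of_spectral_factor h₀ h₁ h₂ h₃ ha₄ ha₂ ha₁ (e (n - 2)) (e (n - 1)) (e n)
      (e (n + 1))⟩
end

section
/- Let m̃ : Λ → ℝ³ be a grid function on a uniform 1D periodic grid with |m̃ᵢ| ≥ 1/2 for all i, let m̲ : Λ → ℝ³ satisfy |m̲ᵢ| = 1 for all i, and set mᵢ = m̃ᵢ/|m̃ᵢ|. Suppose ‖m‖_∞ + ‖Dm‖_∞ ≤ M and ‖m̃‖_∞ + ‖Dm̃‖_∞ ≤ M and ‖Dm̲‖_∞ ≤ M for some M. Then there exists a constant C depending only on M such that ‖D(m - m̲)‖₂ ≤ C(‖D(m̃ - m̲)‖₂ + ‖m̃ - m̲‖₂), where (Df)ᵢ = (f_{i+1} - fᵢ)/h and ‖·‖₂ is the discrete ℓ² norm. -/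
open RealInnerProductSpace

lemma aux_sq {E : Type*} [NormedAddCommGroup E] [InnerProductSpace ℝ E]
    (a a' b b' : E) (hb : ‖b‖ = 1) (hb' : ‖b'‖ = 1) :
    ‖a'‖^2 - ‖a‖^2 = ⟪(a'-b') - (a-b), b'+b⟫ + ⟪a'-a, (a'-b')+(a-b)⟫ := by
  have h1 : ⟪b,b⟫ = 1 := by rw [real_inner_self_eq_norm_sq, hb]; norm_num
  have h2 : ⟪b',b'⟫ = 1 := by rw [real_inner_self_eq_norm_sq, hb']; norm_num
  rw [← real_inner_self_eq_norm_sq, ← real_inner_self_eq_norm_sq]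
  simp only [inner_sub_left, inner_sub_right, inner_add_left, inner_add_right]
  linarith [real_inner_comm a b, real_inner_comm a' b, real_inner_comm a b',
    real_inner_comm a' b', real_inner_comm a a', real_inner_comm b b', h1, h2]

set_option maxHeartbeats 1000000 in
lemma ptwise {E : Type*} [NormedAddCommGroup E] [InnerProductSpace ℝ E]
    (K h : ℝ) (hK : 1 ≤ K) (hh : 0 < h) (hh1 : h ≤ 1)
    (a a' b b' : E) (hb : ‖b‖ = 1) (hb' : ‖b'‖ = 1)
    (ha : 1/2 ≤ ‖a‖) (ha' : 1/2 ≤ ‖a'‖)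
    (haK : ‖a‖ ≤ K)
    (hda : ‖a' - a‖ ≤ h * K) (hdb : ‖b' - b‖ ≤ h * K) :
    ‖(‖a'‖⁻¹ • a' - b') - (‖a‖⁻¹ • a - b)‖ ≤
      (8*K+2) * ‖(a'-b') - (a-b)‖ + h * (6*K^2) * (‖a-b‖ + ‖a'-b'‖) := by
  set r := ‖a‖ with hr
  set r' := ‖a'‖ with hr'
  have hr0 : (0:ℝ) < r := by linarith
  have hr'0 : (0:ℝ) < r' := by linarith
  have hid : (r'⁻¹ • a' - b') - (r⁻¹ • a - b)
      = r'⁻¹ • ((a'-b') - (a-b)) + (r'⁻¹-1) • (b'-b) + (r'⁻¹-r⁻¹) • a := by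
    module
  -- bound on |r' - r|
  have hsq := aux_sq a a' b b' hb hb'
  have hy : |r'^2 - r^2| ≤ 2 * ‖(a'-b') - (a-b)‖ + h*K * (‖a-b‖ + ‖a'-b'‖) := by
    rw [hsq]
    have i1 : |⟪(a'-b') - (a-b), b'+b⟫| ≤ ‖(a'-b') - (a-b)‖ * ‖b'+b‖ :=
      abs_real_inner_le_norm _ _
    have i2 : |⟪a'-a, (a'-b')+(a-b)⟫| ≤ ‖a'-a‖ * ‖(a'-b')+(a-b)‖ :=
      abs_real_inner_le_norm _ _
    have n1 : ‖b'+b‖ ≤ 2 := by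
      calc ‖b'+b‖ ≤ ‖b'‖ + ‖b‖ := norm_add_le _ _
      _ = 2 := by rw [hb, hb']; norm_num
    have n2 : ‖(a'-b')+(a-b)‖ ≤ ‖a'-b'‖ + ‖a-b‖ := norm_add_le _ _
    have nn : (0:ℝ) ≤ ‖(a'-b') - (a-b)‖ := norm_nonneg _
    have nn2 : (0:ℝ) ≤ ‖a'-a‖ := norm_nonneg _
    have nn3 : (0:ℝ) ≤ ‖a'-b'‖ + ‖a-b‖ := by positivity
    calc |⟪(a'-b') - (a-b), b'+b⟫ + ⟪a'-a, (a'-b')+(a-b)⟫|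
        ≤ |⟪(a'-b') - (a-b), b'+b⟫| + |⟪a'-a, (a'-b')+(a-b)⟫| := abs_add_le _ _
      _ ≤ ‖(a'-b') - (a-b)‖ * 2 + (h*K) * (‖a'-b'‖ + ‖a-b‖) := by
          have e1 : |⟪(a'-b') - (a-b), b'+b⟫| ≤ ‖(a'-b') - (a-b)‖ * 2 :=
            i1.trans (mul_le_mul_of_nonneg_left n1 nn)
          have e2 : |⟪a'-a, (a'-b')+(a-b)⟫| ≤ (h*K) * (‖a'-b'‖ + ‖a-b‖) := by
            refine i2.trans ?_
            exact mul_le_mul hda n2 (norm_nonneg _) (by positivity)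
          linarith
      _ ≤ 2 * ‖(a'-b') - (a-b)‖ + h*K * (‖a-b‖ + ‖a'-b'‖) := by ring_nf; linarith
  have hrd : |r' - r| ≤ |r'^2 - r^2| := by
    have h1 : |r'^2 - r^2| = |r' - r| * (r' + r) := by
      rw [show r'^2 - r^2 = (r' - r) * (r' + r) by ring, abs_mul,
        abs_of_pos (by linarith : (0:ℝ) < r' + r)]
    rw [h1]
    nlinarith [abs_nonneg (r' - r)]
  have key : |r' - r| ≤ 2 * ‖(a'-b') - (a-b)‖ + h*K * (‖a-b‖ + ‖a'-b'‖) :=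
    hrd.trans hy
  rw [hid]
  have n1 : ‖r'⁻¹ • ((a'-b') - (a-b))‖ ≤ 2 * ‖(a'-b') - (a-b)‖ := by
    rw [norm_smul, Real.norm_eq_abs, abs_of_pos (by positivity)]
    have : r'⁻¹ ≤ 2 := by
      rw [inv_le_comm₀ hr'0 (by norm_num)]; linarith
    exact mul_le_mul_of_nonneg_right this (norm_nonneg _)
  have hr1 : |r' - 1| ≤ ‖a' - b'‖ := by
    have := abs_norm_sub_norm_le a' b'
    rwa [hb', ← hr'] at this
  have n2 : ‖(r'⁻¹ - 1) • (b'-b)‖ ≤ (2 * ‖a'-b'‖) * (h*K) := by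
    rw [norm_smul, Real.norm_eq_abs]
    have e : |r'⁻¹ - 1| ≤ 2 * ‖a'-b'‖ := by
      have : r'⁻¹ - 1 = (1 - r') / r' := by field_simp
      rw [this, abs_div, abs_of_pos hr'0, div_le_iff₀ hr'0]
      have : |1 - r'| = |r' - 1| := abs_sub_comm _ _
      rw [this]
      nlinarith [abs_nonneg (r' - 1), norm_nonneg (a' - b'), hr1]
    exact mul_le_mul e hdb (norm_nonneg _) (by positivity)
  have n3 : ‖(r'⁻¹ - r⁻¹) • a‖ ≤ (4 * |r' - r|) * K := by
    rw [norm_smul, Real.norm_eq_abs, ← hr]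
    have e : |r'⁻¹ - r⁻¹| ≤ 4 * |r' - r| := by
      have hrr : (0:ℝ) < r * r' := mul_pos hr0 hr'0
      have h0 : r'⁻¹ - r⁻¹ = (r - r') / (r * r') := by
        rw [inv_sub_inv hr'0.ne' hr0.ne']; rw [mul_comm]
      rw [h0, abs_div, abs_of_pos hrr, div_le_iff₀ hrr, abs_sub_comm r r']
      have h4 : (0:ℝ) ≤ 4 * (r * r') - 1 := by nlinarith
      nlinarith [mul_nonneg (abs_nonneg (r' - r)) h4]
    exact mul_le_mul e haK (norm_nonneg _) (by positivity)
  calc ‖r'⁻¹ • ((a'-b') - (a-b)) + (r'⁻¹-1) • (b'-b) + (r'⁻¹-r⁻¹) • a‖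
      ≤ ‖r'⁻¹ • ((a'-b') - (a-b)) + (r'⁻¹-1) • (b'-b)‖ + ‖(r'⁻¹-r⁻¹) • a‖ :=
        norm_add_le _ _
    _ ≤ ‖r'⁻¹ • ((a'-b') - (a-b))‖ + ‖(r'⁻¹-1) • (b'-b)‖ + ‖(r'⁻¹-r⁻¹) • a‖ := by
        have := norm_add_le (r'⁻¹ • ((a'-b') - (a-b))) ((r'⁻¹-1) • (b'-b))
        linarith
    _ ≤ (8*K+2) * ‖(a'-b') - (a-b)‖ + h * (6*K^2) * (‖a-b‖ + ‖a'-b'‖) := by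
        have hK0 : (0:ℝ) < K := by linarith
        have k4 : 4*K*|r' - r| ≤ 4*K*(2 * ‖(a'-b') - (a-b)‖ + h*K * (‖a-b‖ + ‖a'-b'‖)) :=
          mul_le_mul_of_nonneg_left key (by positivity)
        have h1 : (0:ℝ) ≤ h*K^2*‖a-b‖ := by positivity
        have h2 : (0:ℝ) ≤ h*K*(K-1)*‖a'-b'‖ :=
          mul_nonneg (mul_nonneg (mul_nonneg hh.le hK0.le) (by linarith)) (norm_nonneg _)
        linarith [n1, n2, n3, k4, h1, h2]

lemma sqrt_add_le' (u v : ℝ) (hu : 0 ≤ u) (hv : 0 ≤ v) :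
    Real.sqrt (u + v) ≤ Real.sqrt u + Real.sqrt v := by
  rw [show u + v = u + v by rfl]
  have h1 : u + v ≤ (Real.sqrt u + Real.sqrt v)^2 := by
    nlinarith [Real.sq_sqrt hu, Real.sq_sqrt hv, Real.sqrt_nonneg u, Real.sqrt_nonneg v]
  calc Real.sqrt (u + v) ≤ Real.sqrt ((Real.sqrt u + Real.sqrt v)^2) := Real.sqrt_le_sqrt h1
    _ = Real.sqrt u + Real.sqrt v := Real.sqrt_sq (by positivity)

lemma sqrt_smul_le (c d x : ℝ) (hx : 0 ≤ x) (hd : 0 ≤ d) (hcd : c ≤ d^2) :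
    Real.sqrt (c * x) ≤ d * Real.sqrt x := by
  calc Real.sqrt (c * x) ≤ Real.sqrt (d^2 * x) := by
        apply Real.sqrt_le_sqrt; nlinarith
    _ = d * Real.sqrt x := by
        rw [Real.sqrt_mul (by positivity), Real.sqrt_sq hd]

set_option maxHeartbeats 1000000 in
theorem stmt13 (M : ℝ) :
    ∃ C : ℝ, 0 < C ∧
      ∀ (N : ℕ) (_ : NeZero N) (h : ℝ), h = 1 / N →
      ∀ (mt mb m : ZMod N → EuclideanSpace ℝ (Fin 3)),
        (∀ i, (1:ℝ)/2 ≤ ‖mt i‖) →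
        (∀ i, ‖mb i‖ = 1) →
        (∀ i, m i = (‖mt i‖)⁻¹ • mt i) →
        ((⨆ i, ‖m i‖) + ⨆ i, ‖(m (i+1) - m i)‖ / h) ≤ M →
        ((⨆ i, ‖mt i‖) + ⨆ i, ‖(mt (i+1) - mt i)‖ / h) ≤ M →
        (⨆ i, ‖(mb (i+1) - mb i)‖ / h) ≤ M →
        Real.sqrt (h * ∑ i : ZMod N, ‖((m (i+1) - mb (i+1)) - (m i - mb i))‖^2 / h^2)
          ≤ C * (Real.sqrt (h * ∑ i : ZMod N, ‖((mt (i+1) - mb (i+1)) - (mt i - mb i))‖^2 / h^2)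
              + Real.sqrt (h * ∑ i : ZMod N, ‖mt i - mb i‖^2)) := by
  set K : ℝ := max M 1 with hKdef
  have hK1 : (1:ℝ) ≤ K := le_max_right _ _
  have hK0 : (0:ℝ) < K := by linarith
  set A : ℝ := 8*K + 2 with hAdef
  set B : ℝ := 6*K^2 with hBdef
  have hA0 : (0:ℝ) < A := by positivity
  have hB0 : (0:ℝ) < B := by positivity
  refine ⟨2*A + 3*B, by positivity, ?_⟩
  intro N hN h hdef mt mb m hmt_lb hmb_unit hm hsupm hsupmt hsupmb
  have hNpos : (0:ℝ) < (N:ℝ) := by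
    have := hN.out; positivity
  have hh : (0:ℝ) < h := by rw [hdef]; positivity
  have hh1 : h ≤ 1 := by
    rw [hdef, div_le_one hNpos]
    exact_mod_cast Nat.one_le_iff_ne_zero.mpr hN.out
  have hMK : M ≤ K := le_max_left _ _
  -- extract pointwise bounds from the sups
  have bdd : ∀ f : ZMod N → ℝ, BddAbove (Set.range f) := fun f =>
    Set.Finite.bddAbove (Set.finite_range f)
  have hsup1nn : (0:ℝ) ≤ ⨆ i, ‖mt i‖ := Real.iSup_nonneg fun i => norm_nonneg _
  have hsup2nn : (0:ℝ) ≤ ⨆ i, ‖(mt (i+1) - mt i)‖ / h :=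
    Real.iSup_nonneg fun i => by positivity
  have hmtK : ∀ i, ‖mt i‖ ≤ K := by
    intro i
    calc ‖mt i‖ ≤ ⨆ j, ‖mt j‖ := le_ciSup (f := fun j => ‖mt j‖) (bdd _) i
      _ ≤ M := by linarith
      _ ≤ K := hMK
  have hdmt : ∀ i, ‖mt (i+1) - mt i‖ ≤ h * K := by
    intro i
    have h1 : ‖mt (i+1) - mt i‖ / h ≤ K := by
      calc ‖mt (i+1) - mt i‖ / h ≤ ⨆ j, ‖(mt (j+1) - mt j)‖ / h := le_ciSup (f := fun j => ‖(mt (j+1) - mt j)‖ / h) (bdd _) i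
        _ ≤ M := by linarith
        _ ≤ K := hMK
    rw [div_le_iff₀ hh] at h1; linarith [h1]
  have hdmb : ∀ i, ‖mb (i+1) - mb i‖ ≤ h * K := by
    intro i
    have h1 : ‖mb (i+1) - mb i‖ / h ≤ K := by
      calc ‖mb (i+1) - mb i‖ / h ≤ ⨆ j, ‖(mb (j+1) - mb j)‖ / h := le_ciSup (f := fun j => ‖(mb (j+1) - mb j)‖ / h) (bdd _) i
        _ ≤ M := hsupmb
        _ ≤ K := hMK
    rw [div_le_iff₀ hh] at h1; linarith [h1]
  -- pointwise estimate
  have hpt : ∀ i : ZMod N, ‖(m (i+1) - mb (i+1)) - (m i - mb i)‖ ≤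
      A * ‖(mt (i+1) - mb (i+1)) - (mt i - mb i)‖
        + h * B * (‖mt i - mb i‖ + ‖mt (i+1) - mb (i+1)‖) := by
    intro i
    rw [hm i, hm (i+1)]
    exact ptwise K h hK1 hh hh1 (mt i) (mt (i+1)) (mb i) (mb (i+1))
      (hmb_unit i) (hmb_unit (i+1)) (hmt_lb i) (hmt_lb (i+1)) (hmtK i)
      (hdmt i) (hdmb i)
  -- squared pointwise estimate
  have hsq : ∀ i : ZMod N,
      ‖(m (i+1) - mb (i+1)) - (m i - mb i)‖^2 / h^2 ≤
        2*A^2 * (‖(mt (i+1) - mb (i+1)) - (mt i - mb i)‖^2 / h^2)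
          + 4*B^2 * (‖mt i - mb i‖^2 + ‖mt (i+1) - mb (i+1)‖^2) := by
    intro i
    have hp := hpt i
    set L := ‖(m (i+1) - mb (i+1)) - (m i - mb i)‖ with hL
    set P := ‖(mt (i+1) - mb (i+1)) - (mt i - mb i)‖ with hP
    set y := ‖mt i - mb i‖ with hy
    set y' := ‖mt (i+1) - mb (i+1)‖ with hy'
    have hL0 : 0 ≤ L := norm_nonneg _
    have hP0 : 0 ≤ P := norm_nonneg _
    have hy0 : 0 ≤ y := norm_nonneg _
    have hy'0 : 0 ≤ y' := norm_nonneg _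
    have h2 : L^2 ≤ 2*A^2*P^2 + 4*B^2*h^2*(y^2 + y'^2) := by
      have e1 : L^2 ≤ (A*P + h*B*(y+y'))^2 := pow_le_pow_left₀ hL0 hp 2
      have e2 : (A*P + h*B*(y+y'))^2 ≤ 2*(A*P)^2 + 2*(h*B*(y+y'))^2 := by
        nlinarith [sq_nonneg (A*P - h*B*(y+y'))]
      have e3 : (h*B*(y+y'))^2 ≤ h^2*B^2*(2*(y^2+y'^2)) := by
        nlinarith [mul_nonneg (mul_nonneg (sq_nonneg h) (sq_nonneg B)) (sq_nonneg (y-y'))]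
      nlinarith [e1, e2, e3]
    have hh2 : (0:ℝ) < h^2 := by positivity
    calc L^2/h^2 ≤ (2*A^2*P^2 + 4*B^2*h^2*(y^2 + y'^2))/h^2 := by gcongr
      _ = 2*A^2 * (P^2/h^2) + 4*B^2 * (y^2 + y'^2) := by field_simp
  -- sum the estimates
  set Sp := ∑ i : ZMod N, ‖(mt (i+1) - mb (i+1)) - (mt i - mb i)‖^2 / h^2 with hSp
  set Sy := ∑ i : ZMod N, ‖mt i - mb i‖^2 with hSy
  have hSp0 : 0 ≤ Sp := Finset.sum_nonneg fun i _ => by positivity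
  have hSy0 : 0 ≤ Sy := Finset.sum_nonneg fun i _ => by positivity
  have reidx : ∑ i : ZMod N, ‖mt (i+1) - mb (i+1)‖^2 = Sy :=
    Equiv.sum_comp (Equiv.addRight (1 : ZMod N)) (fun j => ‖mt j - mb j‖^2)
  have hsum : ∑ i : ZMod N, ‖(m (i+1) - mb (i+1)) - (m i - mb i)‖^2 / h^2
      ≤ 2*A^2 * Sp + 8*B^2 * Sy := by
    calc ∑ i : ZMod N, ‖(m (i+1) - mb (i+1)) - (m i - mb i)‖^2 / h^2
        ≤ ∑ i : ZMod N, (2*A^2 * (‖(mt (i+1) - mb (i+1)) - (mt i - mb i)‖^2 / h^2)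
          + 4*B^2 * (‖mt i - mb i‖^2 + ‖mt (i+1) - mb (i+1)‖^2)) :=
          Finset.sum_le_sum fun i _ => hsq i
      _ = 2*A^2 * Sp + 8*B^2 * Sy := by
          simp only [mul_add]
          rw [Finset.sum_add_distrib, Finset.sum_add_distrib, ← Finset.mul_sum,
            ← Finset.mul_sum, ← Finset.mul_sum, reidx, ← hSp, ← hSy]
          ring
  have hhSp0 : (0:ℝ) ≤ h * Sp := mul_nonneg hh.le hSp0
  have hhSy0 : (0:ℝ) ≤ h * Sy := mul_nonneg hh.le hSy0
  have s1 : Real.sqrt (2*A^2 * (h*Sp)) ≤ 2*A * Real.sqrt (h*Sp) :=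
    sqrt_smul_le _ _ _ hhSp0 (by positivity) (by nlinarith)
  have s2 : Real.sqrt (8*B^2 * (h*Sy)) ≤ 3*B * Real.sqrt (h*Sy) :=
    sqrt_smul_le _ _ _ hhSy0 (by positivity) (by nlinarith)
  calc Real.sqrt (h * ∑ i : ZMod N, ‖(m (i+1) - mb (i+1)) - (m i - mb i)‖^2 / h^2)
      ≤ Real.sqrt (2*A^2 * (h*Sp) + 8*B^2 * (h*Sy)) := by
        apply Real.sqrt_le_sqrt
        have := mul_le_mul_of_nonneg_left hsum hh.le
        nlinarith [this]
    _ ≤ Real.sqrt (2*A^2 * (h*Sp)) + Real.sqrt (8*B^2 * (h*Sy)) :=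
        sqrt_add_le' _ _ (by positivity) (by positivity)
    _ ≤ 2*A * Real.sqrt (h*Sp) + 3*B * Real.sqrt (h*Sy) := by linarith
    _ ≤ (2*A + 3*B) * (Real.sqrt (h*Sp) + Real.sqrt (h*Sy)) := by
        nlinarith [Real.sqrt_nonneg (h*Sp), Real.sqrt_nonneg (h*Sy), hA0, hB0]
end
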